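/- Let M ≥ 2, s = 2, and fix times T₁,...,T_M > 0, boundary data (p₀, v₀) and (p_M, v_M), and intermediate waypoints q₁,...,q_{M-1}. Then the quadratic function of the free intermediate velocities ṽ = (w₁,...,w_{M-1}) ∈ ℝ^{M-1} given by J(ṽ) = Σᵢ dᵢ^T H(Tᵢ) dᵢ (where dᵢ collects the endpoint positions/velocities of piece i, with positions fixed and interior velocities equal to the corresponding wⱼ) is strictly convex, so the minimizer ṽ* exists, is unique, and satisfies the tridiagonal linear system M ṽ* = b̄ with M_{ii} = 4/Tᵢ + 4/T_{i+1}, M_{i,i+1} = M_{i+1,i} = 2/T_{i+1}. -/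

import Mathlib

open Matrix

/-- Acceleration-energy quadratic form of a cubic piece of duration `t`,
in terms of end-derivatives `d = (pos at start, vel at start, pos at end, vel at end)`. -/
noncomputable def Hmat (t : ℝ) : Matrix (Fin 4) (Fin 4) ℝ :=
  (1 / t ^ 3) •
    !![(12 : ℝ), 6*t, -12, 6*t;
       6*t, 4*t^2, -6*t, 2*t^2;
       -12, -6*t, 12, -6*t;
       6*t, 2*t^2, -6*t, 4*t^2]

/-- The full velocity profile: boundary velocities `v0`, `vM` are fixed, while the
interior velocities are the free variables `w`. -/
noncomputable def vel (M : ℕ) (v0 vM : ℝ) (w : Fin (M - 1) → ℝ) (k : Fin (M + 1)) : ℝ :=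
  if hk0 : k.val = 0 then v0
  else if hkM : k.val = M then vM
  else w ⟨k.val - 1, by have := k.isLt; omega⟩

/-- Total acceleration energy of the `M`-piece cubic spline as a function of the free
interior velocities. -/
noncomputable def Jcost (M : ℕ) (T : Fin M → ℝ) (pos : Fin (M + 1) → ℝ) (v0 vM : ℝ)
    (w : Fin (M - 1) → ℝ) : ℝ :=
  ∑ i : Fin M,
    dotProduct
      ![pos i.castSucc, vel M v0 vM w i.castSucc, pos i.succ, vel M v0 vM w i.succ]
      ((Hmat (T i)).mulVec
        ![pos i.castSucc, vel M v0 vM w i.castSucc, pos i.succ, vel M v0 vM w i.succ])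

/-- The symmetric tridiagonal coefficient matrix of the optimality system. -/
noncomputable def Mtri (M : ℕ) (T : Fin M → ℝ) : Matrix (Fin (M - 1)) (Fin (M - 1)) ℝ :=
  fun i j =>
    if i = j then
      4 / T ⟨i.val, by have := i.isLt; omega⟩ + 4 / T ⟨i.val + 1, by have := i.isLt; omega⟩
    else if i.val + 1 = j.val ∨ j.val + 1 = i.val then
      2 / T ⟨max i.val j.val, by have := i.isLt; have := j.isLt; omega⟩
    else 0

/-- The right-hand side of the optimality system, determined by the fixed positions and
boundary velocities. -/
noncomputable def btri (M : ℕ) (T : Fin M → ℝ) (pos : Fin (M + 1) → ℝ) (v0 vM : ℝ)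
    (i : Fin (M - 1)) : ℝ :=
  6 * (pos ⟨i.val + 1, by have := i.isLt; omega⟩ - pos ⟨i.val, by have := i.isLt; omega⟩) /
      (T ⟨i.val, by have := i.isLt; omega⟩) ^ 2 +
    6 * (pos ⟨i.val + 2, by have := i.isLt; omega⟩ - pos ⟨i.val + 1, by have := i.isLt; omega⟩) /
      (T ⟨i.val + 1, by have := i.isLt; omega⟩) ^ 2 -
    (if i.val = 0 then 2 * v0 / T ⟨0, by have := i.isLt; omega⟩ else 0) -
    (if i.val = M - 2 then 2 * vM / T ⟨M - 1, by have := i.isLt; omega⟩ else 0)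

/-! Split the velocity profile as `vel M v0 vM w = vel M v0 vM 0 + vel M 0 0 w`: the boundary
velocities plus `w` extended by zero. The energy of each piece is then its value at `w = 0`, plus a
part linear in `vel M 0 0 w`, plus `4 (u² + u v + v²) / T` in the values `u, v` of `vel M 0 0 w` at
its ends. Summing by parts over the pieces gives `J w = wᵀ A w - 2 bᵀ w + J 0` with `A = Mtri` and
`b = btri`, where `wᵀ A w` is the sum of the quadratic parts and so is positive unless `w = 0`. A
quadratic function with positive definite `A` is strictly convex, and its minimizers are exactly
the solutions of `A w = b`. -/

namespace Matrix

variable {n : Type*} [Fintype n] {A : Matrix n n ℝ} {b : n → ℝ} {c : ℝ}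

lemma IsHermitian.dotProduct_mulVec_comm (hA : A.IsHermitian) (x y : n → ℝ) :
    x ⬝ᵥ A *ᵥ y = y ⬝ᵥ A *ᵥ x := by
  rw [dotProduct_mulVec, ← mulVec_transpose, ← conjTranspose_eq_transpose_of_trivial, hA.eq,
    dotProduct_comm]

lemma IsHermitian.quadratic_add (hA : A.IsHermitian) (x z : n → ℝ) :
    (x + z) ⬝ᵥ A *ᵥ (x + z) - 2 * (b ⬝ᵥ (x + z)) + c =
      x ⬝ᵥ A *ᵥ x - 2 * (b ⬝ᵥ x) + c + 2 * ((A *ᵥ x - b) ⬝ᵥ z) + z ⬝ᵥ A *ᵥ z := by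
  simp only [mulVec_add, dotProduct_add, add_dotProduct, sub_dotProduct,
    hA.dotProduct_mulVec_comm z x, dotProduct_comm (A *ᵥ x) z, dotProduct_comm b z]
  ring

lemma PosDef.strictConvexOn_quadratic (hA : A.PosDef) :
    StrictConvexOn ℝ Set.univ fun x => x ⬝ᵥ A *ᵥ x - 2 * (b ⬝ᵥ x) + c := by
  refine ⟨convex_univ, fun x _ y _ hxy a a' ha ha' haa' => ?_⟩
  obtain rfl : a' = 1 - a := by linarith
  have hpos : 0 < (x - y) ⬝ᵥ A *ᵥ (x - y) := by
    simpa using hA.dotProduct_mulVec_pos (sub_ne_zero.mpr hxy)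
  have hx := hA.isHermitian.quadratic_add (b := b) (c := c) y (x - y)
  have hmid := hA.isHermitian.quadratic_add (b := b) (c := c) y (a • (x - y))
  rw [add_sub_cancel] at hx
  rw [show y + a • (x - y) = a • x + (1 - a) • y by module] at hmid
  simp only [mulVec_smul, dotProduct_smul, smul_dotProduct, smul_eq_mul] at hmid ⊢
  nlinarith [mul_pos ha ha']

lemma PosSemidef.isMinOn_quadratic (hA : A.PosSemidef) {x : n → ℝ} (hx : A *ᵥ x = b) :
    IsMinOn (fun x => x ⬝ᵥ A *ᵥ x - 2 * (b ⬝ᵥ x) + c) Set.univ x := isMinOn_iff.mpr fun y _ => by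
  have := hA.isHermitian.quadratic_add (b := b) (c := c) x (y - x)
  rw [add_sub_cancel, sub_eq_zero.mpr hx, zero_dotProduct] at this
  have hnonneg : 0 ≤ (y - x) ⬝ᵥ A *ᵥ (y - x) := by simpa using hA.dotProduct_mulVec_nonneg (y - x)
  linarith

lemma PosDef.isMinOn_quadratic_iff (hA : A.PosDef) {x : n → ℝ} :
    IsMinOn (fun x => x ⬝ᵥ A *ᵥ x - 2 * (b ⬝ᵥ x) + c) Set.univ x ↔ A *ᵥ x = b := by
  classical
  refine ⟨fun hx => ?_, hA.posSemidef.isMinOn_quadratic⟩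
  obtain ⟨x₀, hx₀⟩ := mulVec_surjective_iff_isUnit.mpr hA.isUnit b
  rwa [hA.strictConvexOn_quadratic.eq_of_isMinOn hx (hA.posSemidef.isMinOn_quadratic hx₀)
    trivial trivial]

lemma PosDef.existsUnique_isMinOn_quadratic (hA : A.PosDef) :
    ∃! x, IsMinOn (fun x => x ⬝ᵥ A *ᵥ x - 2 * (b ⬝ᵥ x) + c) Set.univ x := by
  classical
  simp only [hA.isMinOn_quadratic_iff]
  exact Function.Bijective.existsUnique
    ⟨mulVec_injective_iff_isUnit.mpr hA.isUnit, mulVec_surjective_iff_isUnit.mpr hA.isUnit⟩ b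

end Matrix

lemma Fin.sum_castSucc_mul_add_succ_mul {R : Type*} [CommSemiring R] {n : ℕ}
    (z : Fin (n + 2) → R) (h0 : z 0 = 0) (hlast : z (Fin.last _) = 0) (α β : Fin (n + 1) → R) :
    ∑ i, (z i.castSucc * α i + z i.succ * β i) =
      ∑ j : Fin n, z j.succ.castSucc * (α j.succ + β j.castSucc) := by
  rw [Finset.sum_add_distrib, Fin.sum_univ_succ,
    Fin.sum_univ_castSucc (f := fun i => z i.succ * β i)]
  simp [h0, hlast, mul_add, Finset.sum_add_distrib]

lemma Hmat_quadForm_add {t : ℝ} (ht : t ≠ 0) (p p' a a' u v : ℝ) :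
    ![p, a + u, p', a' + v] ⬝ᵥ Hmat t *ᵥ ![p, a + u, p', a' + v] =
      ![p, a, p', a'] ⬝ᵥ Hmat t *ᵥ ![p, a, p', a'] + 4 * (u ^ 2 + u * v + v ^ 2) / t +
        u * (4 * (2 * a + a') / t - 12 * (p' - p) / t ^ 2) +
        v * (4 * (a + 2 * a') / t - 12 * (p' - p) / t ^ 2) := by
  simp [Hmat, mulVec, dotProduct, Fin.sum_univ_succ]
  field_simp
  ring

lemma vel_eq_add (M : ℕ) (v0 vM : ℝ) (w : Fin (M - 1) → ℝ) :
    vel M v0 vM w = vel M v0 vM 0 + vel M 0 0 w := by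
  ext k
  simp only [vel, Pi.add_apply, Pi.zero_apply]
  split_ifs <;> simp

lemma vel_apply_last {M : ℕ} (hM : M ≠ 0) (v0 vM : ℝ) (w : Fin (M - 1) → ℝ) :
    vel M v0 vM w (Fin.last M) = vM := by
  simp [vel, hM]

lemma vel_zero_zero_eq_sum (M : ℕ) (w : Fin (M - 1) → ℝ) (m : Fin (M + 1)) :
    vel M 0 0 w m = ∑ k : Fin (M - 1), if (k : ℕ) + 1 = m then w k else 0 := by
  unfold vel
  split_ifs with h0 hM
  · exact (Finset.sum_eq_zero fun k _ => if_neg (by omega)).symm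
  · exact (Finset.sum_eq_zero fun k _ => if_neg (by omega)).symm
  · rw [Finset.sum_eq_single ⟨m - 1, by omega⟩
      (fun k _ hk => if_neg fun h => hk (Fin.ext (by simp only; omega))) (by simp),
      if_pos (by simp only; omega)]

section

variable {N : ℕ}

lemma vel_succ_castSucc (v0 vM : ℝ) (w : Fin (N + 1) → ℝ) (j : Fin (N + 1)) :
    vel (N + 2) v0 vM w j.succ.castSucc = w j := by
  have := j.isLt
  simp [vel]
  omega

lemma sum_vel_castSucc_mul_add_succ_mul (w : Fin (N + 1) → ℝ) (α β : Fin (N + 2) → ℝ) :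
    ∑ i, (vel (N + 2) 0 0 w i.castSucc * α i + vel (N + 2) 0 0 w i.succ * β i) =
      ∑ j, w j * (α j.succ + β j.castSucc) := by
  rw [Fin.sum_castSucc_mul_add_succ_mul _ rfl (vel_apply_last (by omega) 0 0 w)]
  simp only [vel_succ_castSucc]

lemma Mtri_apply (T : Fin (N + 2) → ℝ) (j k : Fin (N + 1)) :
    Mtri (N + 2) T j k =
      (if (k : ℕ) + 1 = j then 2 / T j.castSucc else 0) +
        (if k = j then 4 / T j.castSucc + 4 / T j.succ else 0) +
        (if (k : ℕ) = j + 1 then 2 / T j.succ else 0) := by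
  unfold Mtri
  split_ifs <;> (try simp only [add_zero, zero_add]) <;>
    first | omega | rfl | (congr 2; ext; simp; omega)

lemma Mtri_isHermitian (T : Fin (N + 2) → ℝ) : (Mtri (N + 2) T).IsHermitian := by
  refine Matrix.IsHermitian.ext fun j k => ?_
  unfold Mtri
  split_ifs <;> simp_all [max_comm]

lemma Mtri_mulVec_apply (T : Fin (N + 2) → ℝ) (w : Fin (N + 1) → ℝ) (j : Fin (N + 1)) :
    (Mtri (N + 2) T *ᵥ w) j =
      2 / T j.castSucc * vel (N + 2) 0 0 w j.castSucc.castSucc +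
        (4 / T j.castSucc + 4 / T j.succ) * vel (N + 2) 0 0 w j.succ.castSucc +
        2 / T j.succ * vel (N + 2) 0 0 w j.succ.succ := by
  simp only [mulVec, dotProduct, Mtri_apply, vel_zero_zero_eq_sum, add_mul, ite_mul, zero_mul,
    Finset.sum_add_distrib, Finset.mul_sum, mul_ite, mul_zero]
  simp [Fin.ext_iff]

lemma btri_apply (T : Fin (N + 2) → ℝ) (pos : Fin (N + 3) → ℝ) (v0 vM : ℝ) (j : Fin (N + 1)) :
    btri (N + 2) T pos v0 vM j =
      6 * (pos j.succ.castSucc - pos j.castSucc.castSucc) / T j.castSucc ^ 2 +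
        6 * (pos j.succ.succ - pos j.succ.castSucc) / T j.succ ^ 2 -
        2 * vel (N + 2) v0 vM 0 j.castSucc.castSucc / T j.castSucc -
        2 * vel (N + 2) v0 vM 0 j.succ.succ / T j.succ := by
  have hT0 (h : (j : ℕ) = 0) : T ⟨0, by omega⟩ = T j.castSucc :=
    congrArg T (Fin.ext (by simp [h]))
  have hTN (h : (j : ℕ) = N) : T ⟨N + 2 - 1, by omega⟩ = T j.succ :=
    congrArg T (Fin.ext (by simp [h]))
  simp only [btri, vel, Fin.val_succ, Fin.val_castSucc]
  split_ifs <;> first | contradiction | omega | skip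
  all_goals
    try simp only [Pi.zero_apply, mul_zero, zero_div, sub_zero]
    try rw [hT0 (by omega)]
    try rw [hTN (by omega)]
  all_goals rfl

noncomputable def velEnergy {M : ℕ} (T : Fin M → ℝ) (z : Fin (M + 1) → ℝ) : ℝ :=
  ∑ i, 4 * (z i.castSucc ^ 2 + z i.castSucc * z i.succ + z i.succ ^ 2) / T i

lemma velEnergy_pos {M : ℕ} {T : Fin M → ℝ} (hT : ∀ i, 0 < T i) {z : Fin (M + 1) → ℝ}
    {i : Fin M} (hi : z i.succ ≠ 0) : 0 < velEnergy T z := by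
  have hnonneg (u v : ℝ) : 0 ≤ u ^ 2 + u * v + v ^ 2 := by nlinarith [sq_nonneg (u + v)]
  refine Finset.sum_pos' (fun k _ => div_nonneg (by linarith [hnonneg (z k.castSucc) (z k.succ)])
    (hT k).le) ⟨i, Finset.mem_univ _, div_pos ?_ (hT i)⟩
  nlinarith [sq_nonneg (2 * z i.castSucc + z i.succ), sq_pos_of_ne_zero hi]

lemma dotProduct_Mtri_mulVec (T : Fin (N + 2) → ℝ) (w : Fin (N + 1) → ℝ) :
    w ⬝ᵥ Mtri (N + 2) T *ᵥ w = velEnergy T (vel (N + 2) 0 0 w) := by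
  set z := vel (N + 2) 0 0 w with hz
  have hsplit : velEnergy T z = ∑ i, (z i.castSucc * (2 / T i * (2 * z i.castSucc + z i.succ)) +
      z i.succ * (2 / T i * (z i.castSucc + 2 * z i.succ))) :=
    Finset.sum_congr rfl fun i _ => by ring
  rw [hsplit, hz, sum_vel_castSucc_mul_add_succ_mul]
  refine Finset.sum_congr rfl fun j _ => ?_
  rw [Mtri_mulVec_apply, Fin.succ_castSucc]
  ring

lemma Mtri_posDef {T : Fin (N + 2) → ℝ} (hT : ∀ i, 0 < T i) : (Mtri (N + 2) T).PosDef := by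
  refine .of_dotProduct_mulVec_pos (Mtri_isHermitian T) fun w hw => ?_
  obtain ⟨j, hj⟩ := Function.ne_iff.mp hw
  rw [star_trivial, dotProduct_Mtri_mulVec]
  exact velEnergy_pos hT (i := j.castSucc) (by rwa [Fin.succ_castSucc, vel_succ_castSucc])

lemma Jcost_eq {T : Fin (N + 2) → ℝ} (hT : ∀ i, 0 < T i) (pos : Fin (N + 3) → ℝ) (v0 vM : ℝ)
    (w : Fin (N + 1) → ℝ) :
    Jcost (N + 2) T pos v0 vM w =
      w ⬝ᵥ Mtri (N + 2) T *ᵥ w - 2 * (btri (N + 2) T pos v0 vM ⬝ᵥ w) +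
        Jcost (N + 2) T pos v0 vM 0 := by
  set a := vel (N + 2) v0 vM 0 with ha
  set z := vel (N + 2) 0 0 w with hz
  calc Jcost (N + 2) T pos v0 vM w
      = Jcost (N + 2) T pos v0 vM 0 + velEnergy T z +
          ∑ i, (z i.castSucc * (4 * (2 * a i.castSucc + a i.succ) / T i -
              12 * (pos i.succ - pos i.castSucc) / T i ^ 2) +
            z i.succ * (4 * (a i.castSucc + 2 * a i.succ) / T i -
              12 * (pos i.succ - pos i.castSucc) / T i ^ 2)) := by
        simp only [Jcost, velEnergy, ← Finset.sum_add_distrib]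
        refine Finset.sum_congr rfl fun i _ => ?_
        rw [vel_eq_add, Pi.add_apply, Pi.add_apply, Hmat_quadForm_add (hT i).ne', ← ha, ← hz]
        ring
    _ = Jcost (N + 2) T pos v0 vM 0 + w ⬝ᵥ Mtri (N + 2) T *ᵥ w +
          -2 * ∑ j, btri (N + 2) T pos v0 vM j * w j := by
        rw [hz, sum_vel_castSucc_mul_add_succ_mul, ← dotProduct_Mtri_mulVec, Finset.mul_sum]
        congr 1
        refine Finset.sum_congr rfl fun j _ => ?_
        rw [btri_apply, ← ha, Fin.succ_castSucc,
          show a j.succ.castSucc = 0 from vel_succ_castSucc v0 vM 0 j]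
        ring
    _ = _ := by simp only [dotProduct]; ring

end

theorem spline_energy_strictly_convex_unique_minimizer_tridiagonal
    (M : ℕ) (hM : 2 ≤ M) (T : Fin M → ℝ) (hT : ∀ i, 0 < T i)
    (pos : Fin (M + 1) → ℝ) (v0 vM : ℝ) :
    StrictConvexOn ℝ Set.univ (Jcost M T pos v0 vM) ∧
    (∃! w : Fin (M - 1) → ℝ, IsMinOn (Jcost M T pos v0 vM) Set.univ w) ∧
    (∀ w : Fin (M - 1) → ℝ, IsMinOn (Jcost M T pos v0 vM) Set.univ w →
      (Mtri M T).mulVec w = btri M T pos v0 vM) := by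
  obtain ⟨N, rfl⟩ : ∃ N, M = N + 2 := ⟨M - 2, by omega⟩
  have hA : (Mtri (N + 2) T).PosDef := Mtri_posDef hT
  have hJ : Jcost (N + 2) T pos v0 vM = fun w => w ⬝ᵥ Mtri (N + 2) T *ᵥ w -
      2 * (btri (N + 2) T pos v0 vM ⬝ᵥ w) + Jcost (N + 2) T pos v0 vM 0 :=
    funext (Jcost_eq hT pos v0 vM)
  rw [hJ]
  exact ⟨hA.strictConvexOn_quadratic, hA.existsUnique_isMinOn_quadratic,
    fun w => hA.isMinOn_quadratic_iff.mp⟩
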